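/- Let X be a complex Banach space, 𝕁 ∈ {ℝ, [0,∞)}, and let 𝓕 be a set of functions 𝕁 → X satisfying: (6.2) 𝓕 is a linear subspace of the locally Bochner integrable functions 𝕁 → X; (6.3) if φ_n ∈ 𝓕 are bounded and uniformly continuous and φ_n → ψ uniformly on 𝕁, then ψ ∈ 𝓕; (6.4) if φ : ℝ → X is bounded and uniformly continuous with φ|𝕁 ∈ 𝓕, then the translate φ(a + ·)|𝕁 ∈ 𝓕 for every a ∈ ℝ; (6.5) if B ∈ L(X) and φ : ℝ → X is bounded and uniformly continuous with φ|𝕁 ∈ 𝓕, then (B∘φ)|𝕁 ∈ 𝓕. Let φ ∈ L^∞(ℝ, X) be such that (M_h φ)|𝕁 ∈ 𝓕 for every h > 0, where (M_h φ)(t) := (1/h)∫_0^h φ(t+s) ds, and let F ∈ L¹(ℝ, L(X)). Then F*φ is bounded and uniformly continuous on ℝ and (F*φ)|𝕁 ∈ 𝓕. -/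

import Mathlib

open MeasureTheory Filter Complex

open scoped Convolution ENNReal Topology

/-!
Approximate `F` in `L¹` by step functions `S = ∑ₖ 1_{[kδ, (k+1)δ)} Bₖ`. For such `S` the
convolution `S * φ = ∑ₖ δ • Bₖ ((M_δ φ)(· - (k+1)δ))` is a finite combination of translates of
a mean of `φ` with bounded operators applied, so it lies in `𝓕` by (6.2), (6.4) and (6.5), and it
is bounded and uniformly continuous because `M_δ φ` is bounded and Lipschitz. Since
`‖(F - S) * φ‖_∞ ≤ ‖F - S‖₁ ‖φ‖_∞`, `F * φ` is a uniform limit of such convolutions, and (6.3)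
gives `(F * φ)|𝕁 ∈ 𝓕`.
-/

theorem MeasureTheory.MemLp.exists_stronglyMeasurable_bounded_ae_eq {α E : Type*}
    [MeasurableSpace α] {μ : Measure α} [NormedAddCommGroup E] {f : α → E} (hf : MemLp f ∞ μ) :
    ∃ g : α → E, ∃ C : ℝ, StronglyMeasurable g ∧ (∀ x, ‖g x‖ ≤ C) ∧ f =ᵐ[μ] g := by
  obtain ⟨C, hC⟩ : IsBoundedUnder (· ≤ ·) (ae μ) fun x ↦ ‖f x‖₊ :=
    eLpNormEssSup_lt_top_iff_isBoundedUnder.1 (by simpa using hf.2)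
  set g := hf.1.mk f
  have hg : StronglyMeasurable g := hf.1.stronglyMeasurable_mk
  have hfg : f =ᵐ[μ] g := hf.1.ae_eq_mk
  refine ⟨{x | ‖g x‖₊ ≤ C}.indicator g, C,
    hg.indicator (measurableSet_le hg.nnnorm.measurable measurable_const), fun x => ?_, ?_⟩
  · simp only [Set.indicator_apply, Set.mem_ofPred_eq]
    split_ifs with hx
    exacts [mod_cast hx, by simp]
  · filter_upwards [hfg, (eventually_map.1 hC : ∀ᵐ x ∂μ, ‖f x‖₊ ≤ C)] with x hx hxC
    rw [hx] at hxC ⊢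
    simp [hxC]

theorem intervalIntegrable_of_norm_le {E : Type*} [NormedAddCommGroup E] {φ : ℝ → E} {C : ℝ}
    (hφ : AEStronglyMeasurable φ volume) (hφC : ∀ x, ‖φ x‖ ≤ C) (a b : ℝ) :
    IntervalIntegrable φ volume a b :=
  intervalIntegrable_iff.2 <|
    (integrableOn_const measure_Ioc_lt_top.ne).mono' hφ.restrict (.of_forall hφC)

theorem exists_norm_le_of_tendstoUniformly {ι α E : Type*} [NormedAddCommGroup E]
    {p : Filter ι} [p.NeBot] {f : ι → α → E} {g : α → E} (hf : ∀ i, ∃ C, ∀ x, ‖f i x‖ ≤ C)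
    (hfg : TendstoUniformly f g p) : ∃ C, ∀ x, ‖g x‖ ≤ C := by
  obtain ⟨i, hi⟩ := (Metric.tendstoUniformly_iff.1 hfg 1 one_pos).exists
  obtain ⟨C, hC⟩ := hf i
  refine ⟨C + 1, fun x => ?_⟩
  calc ‖g x‖ ≤ ‖f i x‖ + dist (g x) (f i x) := by
        rw [dist_eq_norm]; exact norm_le_insert' _ _
    _ ≤ C + 1 := add_le_add (hC x) (hi x).le

section Mean

variable {X : Type*} [NormedAddCommGroup X] [NormedSpace ℝ X]

noncomputable def mean (h : ℝ) (φ : ℝ → X) (t : ℝ) : X := (1 / h) • ∫ s in (0 : ℝ)..h, φ (t + s)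

theorem mean_congr_ae {φ ψ : ℝ → X} (hφψ : φ =ᵐ[volume] ψ) (h : ℝ) : mean h φ = mean h ψ := by
  ext t
  refine congrArg _ (intervalIntegral.integral_congr_ae ?_)
  filter_upwards [(measurePreserving_add_left volume t).quasiMeasurePreserving.ae_eq hφψ]
    with s hs using fun _ => hs

theorem mean_eq_smul_integral (φ : ℝ → X) (h t : ℝ) :
    mean h φ t = (1 / h) • ∫ s in t..t + h, φ s := by
  simp [mean, intervalIntegral.integral_comp_add_left φ t]

variable {φ : ℝ → X} {C h : ℝ}

theorem norm_mean_le (hφC : ∀ x, ‖φ x‖ ≤ C) (hh : 0 < h) (t : ℝ) : ‖mean h φ t‖ ≤ C := by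
  have := intervalIntegral.norm_integral_le_of_norm_le_const (a := 0) (b := h)
    (fun s _ => hφC (t + s))
  rw [sub_zero, abs_of_pos hh] at this
  rw [mean, norm_smul, Real.norm_of_nonneg (by positivity)]
  calc 1 / h * ‖∫ s in (0 : ℝ)..h, φ (t + s)‖ ≤ 1 / h * (C * h) := by gcongr
    _ = C := by field_simp

theorem lipschitzWith_mean (hφ : AEStronglyMeasurable φ volume) (hφC : ∀ x, ‖φ x‖ ≤ C)
    (hh : 0 < h) : LipschitzWith (2 * C / h).toNNReal (mean h φ) := by
  refine .of_dist_le' fun t₁ t₂ => ?_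
  have hii := intervalIntegrable_of_norm_le hφ hφC
  have hdiff : (∫ s in t₁..t₁ + h, φ s) - ∫ s in t₂..t₂ + h, φ s
      = (∫ s in t₁..t₂, φ s) - ∫ s in t₁ + h..t₂ + h, φ s :=
    intervalIntegral.integral_interval_sub_interval_comm (hii _ _) (hii _ _) (hii _ _)
  have h₁ := intervalIntegral.norm_integral_le_of_norm_le_const (a := t₁) (b := t₂)
    (fun s _ => hφC s)
  have h₂ := intervalIntegral.norm_integral_le_of_norm_le_const (a := t₁ + h) (b := t₂ + h)
    (fun s _ => hφC s)
  rw [add_sub_add_right_eq_sub] at h₂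
  rw [dist_eq_norm, mean_eq_smul_integral, mean_eq_smul_integral, ← smul_sub, hdiff, norm_smul,
    Real.norm_of_nonneg (by positivity), Real.dist_eq, abs_sub_comm]
  calc 1 / h * ‖(∫ s in t₁..t₂, φ s) - ∫ s in t₁ + h..t₂ + h, φ s‖
      ≤ 1 / h * (C * |t₂ - t₁| + C * |t₂ - t₁|) := by gcongr; exact norm_sub_le_of_le h₁ h₂
    _ = 2 * C / h * |t₂ - t₁| := by ring

end Mean

section StepFunction

variable {E : Type*} [NormedAddCommGroup E]

noncomputable def stepFun (δ : ℝ) (n : ℕ) (B : ℤ → E) : ℝ → E :=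
  ∑ k ∈ Finset.Icc (-n : ℤ) n, (Set.Ico (k * δ) (k * δ + δ)).indicator fun _ => B k

theorem integrable_indicator_Ico_const (a b : ℝ) (c : E) :
    Integrable ((Set.Ico a b).indicator fun _ => c) volume :=
  (integrable_indicator_iff measurableSet_Ico).2 (integrableOn_const measure_Ico_lt_top.ne)

theorem integrable_stepFun (δ : ℝ) (n : ℕ) (B : ℤ → E) : Integrable (stepFun δ n B) volume :=
  integrable_finsetSum' _ fun _ _ => integrable_indicator_Ico_const _ _ _

variable {δ : ℝ}

theorem mem_Ico_mul_iff_floor_div_eq (hδ : 0 < δ) (s : ℝ) (k : ℤ) :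
    s ∈ Set.Ico (k * δ) (k * δ + δ) ↔ ⌊s / δ⌋ = k := by
  rw [Int.floor_eq_iff, le_div_iff₀ hδ, div_lt_iff₀ hδ, add_mul, one_mul, Set.mem_Ico]

theorem stepFun_apply (hδ : 0 < δ) (n : ℕ) (B : ℤ → E) (s : ℝ) :
    stepFun δ n B s = if ⌊s / δ⌋ ∈ Finset.Icc (-n : ℤ) n then B ⌊s / δ⌋ else 0 := by
  simp only [stepFun, Finset.sum_apply, Set.indicator_apply, mem_Ico_mul_iff_floor_div_eq hδ,
    Finset.sum_ite_eq]

theorem stepFun_sample_eq (hδ : 0 < δ) {G : ℝ → E} {R : ℝ} (hG : ∀ x, R ≤ |x| → G x = 0)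
    {n : ℕ} (hn : R ≤ n * δ) (s : ℝ) :
    stepFun δ n (fun k => G (k * δ)) s = G (⌊s / δ⌋ * δ) := by
  rw [stepFun_apply hδ]
  split_ifs with hk
  · rfl
  refine (hG _ ?_).symm
  rw [Finset.mem_Icc, not_and_or, not_le, not_le, Int.lt_iff_add_one_le,
    Int.lt_iff_add_one_le] at hk
  rcases hk with hk | hk
  · have : (⌊s / δ⌋ : ℝ) + 1 ≤ -n := mod_cast hk
    exact le_abs.2 (.inr (by nlinarith))
  · have : (n : ℝ) + 1 ≤ ⌊s / δ⌋ := mod_cast hk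
    exact le_abs.2 (.inl (by nlinarith))

theorem norm_sub_sample_le (hδ : 0 < δ) (hδ1 : δ ≤ 1) {G : ℝ → E} {R ε : ℝ}
    (hG : ∀ x, R ≤ |x| → G x = 0) (hGδ : ∀ x y, dist x y < δ → dist (G x) (G y) < ε) (s : ℝ) :
    ‖G s - G (⌊s / δ⌋ * δ)‖ ≤ (Set.Icc (-(R + 1)) (R + 1)).indicator (fun _ => ε) s := by
  obtain ⟨hs₀, hs₁⟩ := (mem_Ico_mul_iff_floor_div_eq hδ s _).2 rfl
  by_cases hs : s ∈ Set.Icc (-(R + 1)) (R + 1)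
  · rw [Set.indicator_of_mem hs, ← dist_eq_norm]
    exact (hGδ _ _ (by rw [Real.dist_eq, abs_of_nonneg (by linarith)]; linarith)).le
  · rw [Set.mem_Icc, ← abs_le, not_le] at hs
    have := abs_sub_abs_le_abs_sub s (⌊s / δ⌋ * δ)
    rw [abs_of_nonneg (a := s - _) (by linarith)] at this
    rw [Set.indicator_of_notMem (by rwa [Set.mem_Icc, ← abs_le, not_le]), hG s (by linarith),
      hG _ (by linarith), sub_zero, norm_zero]

theorem HasCompactSupport.exists_stepFun_integral_norm_sub_le {G : ℝ → E} (hGc : Continuous G)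
    (hGs : HasCompactSupport G) {ε : ℝ} (hε : 0 < ε) :
    ∃ δ > 0, ∃ n : ℕ, ∃ B : ℤ → E, ∫ s, ‖G s - stepFun δ n B s‖ ≤ ε := by
  obtain ⟨R, hR, hGR⟩ := hGs.exists_pos_le_norm
  replace hGR : ∀ x : ℝ, R ≤ |x| → G x = 0 := hGR
  set ε' := ε / (2 * R + 2)
  obtain ⟨δ₀, hδ₀, hGδ₀⟩ :=
    Metric.uniformContinuous_iff.1 (hGs.uniformContinuous_of_continuous hGc) ε' (by positivity)
  set δ := min δ₀ 1
  have hδ : 0 < δ := lt_min hδ₀ one_pos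
  have hn : R ≤ ⌈R / δ⌉₊ * δ := (div_le_iff₀ hδ).1 (Nat.le_ceil _)
  refine ⟨δ, hδ, ⌈R / δ⌉₊, fun k => G (k * δ), ?_⟩
  calc ∫ s, ‖G s - stepFun δ _ (fun k => G (k * δ)) s‖
      ≤ ∫ s, (Set.Icc (-(R + 1)) (R + 1)).indicator (fun _ => ε') s := by
        refine integral_mono ((hGc.integrable_of_hasCompactSupport hGs).sub
          (integrable_stepFun ..)).norm ((integrable_indicator_iff measurableSet_Icc).2
          (integrableOn_const measure_Icc_lt_top.ne)) fun s => ?_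
        rw [stepFun_sample_eq hδ hGR hn]
        exact norm_sub_sample_le hδ (min_le_right _ _) hGR
          (fun x y hxy => hGδ₀ (hxy.trans_le (min_le_left _ _))) s
    _ = ε := by
        rw [integral_indicator_const _ measurableSet_Icc, Real.volume_real_Icc_of_le (by linarith),
          smul_eq_mul]
        simp only [ε']
        field_simp
        ring

theorem MeasureTheory.Integrable.exists_stepFun_integral_norm_sub_le [NormedSpace ℝ E]
    {F : ℝ → E} (hF : Integrable F volume) {ε : ℝ} (hε : 0 < ε) :
    ∃ δ > 0, ∃ n : ℕ, ∃ B : ℤ → E, ∫ s, ‖F s - stepFun δ n B s‖ ≤ ε := by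
  obtain ⟨G, hGs, hFG, hGc, hG⟩ := hF.exists_hasCompactSupport_integral_sub_le (half_pos hε)
  obtain ⟨δ, hδ, n, B, hGS⟩ := hGs.exists_stepFun_integral_norm_sub_le hGc (half_pos hε)
  refine ⟨δ, hδ, n, B, ?_⟩
  have hS := integrable_stepFun δ n B
  calc ∫ s, ‖F s - stepFun δ n B s‖ ≤ ∫ s, (‖F s - G s‖ + ‖G s - stepFun δ n B s‖) :=
        integral_mono (hF.sub hS).norm ((hF.sub hG).norm.add (hG.sub hS).norm) fun s =>
          norm_sub_le_norm_sub_add_norm_sub _ _ _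
    _ = (∫ s, ‖F s - G s‖) + ∫ s, ‖G s - stepFun δ n B s‖ :=
        integral_add (hF.sub hG).norm (hG.sub hS).norm
    _ ≤ ε := by linarith

end StepFunction

theorem finset_sum_convolution {𝕜 G E E' F ι : Type*} [NontriviallyNormedField 𝕜]
    [NormedAddCommGroup E] [NormedAddCommGroup E'] [NormedAddCommGroup F] [NormedSpace 𝕜 E]
    [NormedSpace 𝕜 E'] [NormedSpace 𝕜 F] [NormedSpace ℝ F] [MeasurableSpace G] [Sub G]
    {μ : Measure G} (L : E →L[𝕜] E' →L[𝕜] F) (s : Finset ι) {f : ι → G → E} {g : G → E'}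
    (hfg : ∀ i ∈ s, ConvolutionExists (f i) g L μ) :
    (∑ i ∈ s, f i) ⋆[L, μ] g = ∑ i ∈ s, f i ⋆[L, μ] g := by
  ext x
  simp only [convolution_def, Finset.sum_apply, map_sum, FunLike.coe_sum,
    integral_finsetSum s fun i hi => hfg i hi x]

section OperatorConvolution

variable {X : Type*} [NormedAddCommGroup X] [NormedSpace ℂ X] {ψ : ℝ → X} {C : ℝ}

theorem convolutionExists_of_norm_le {F : ℝ → X →L[ℂ] X} (hF : Integrable F volume)
    (hψ : AEStronglyMeasurable ψ volume) (hψC : ∀ x, ‖ψ x‖ ≤ C) :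
    ConvolutionExists F ψ (.id ℂ _) volume := fun t =>
  BddAbove.convolutionExistsAt _ ⟨C, by rintro _ ⟨x, -, rfl⟩; exact hψC x⟩ MeasurableSet.univ
    (Set.subset_univ _) hF.integrableOn hψ

theorem norm_convolution_le {F : ℝ → X →L[ℂ] X} (hF : Integrable F volume)
    (hψC : ∀ x, ‖ψ x‖ ≤ C) (t : ℝ) :
    ‖(F ⋆[.id ℂ _] ψ) t‖ ≤ (∫ s, ‖F s‖) * C := by
  rw [convolution_def, ← integral_mul_const]
  refine norm_integral_le_of_norm_le (hF.norm.mul_const C) (.of_forall fun s => ?_)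
  exact (F s).le_of_opNorm_le_of_le le_rfl (hψC _)

theorem dist_convolution_le {F G : ℝ → X →L[ℂ] X} (hF : Integrable F volume)
    (hG : Integrable G volume) (hψ : AEStronglyMeasurable ψ volume) (hψC : ∀ x, ‖ψ x‖ ≤ C)
    (t : ℝ) : dist ((F ⋆[.id ℂ _] ψ) t) ((G ⋆[.id ℂ _] ψ) t) ≤ (∫ s, ‖F s - G s‖) * C := by
  have hsplit := (convolutionExists_of_norm_le hG hψ hψC t).add_distrib
    (convolutionExists_of_norm_le (hF.sub hG) hψ hψC t)
  rw [add_sub_cancel] at hsplit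
  rw [dist_eq_norm, hsplit, add_sub_cancel_left]
  exact norm_convolution_le (hF.sub hG) hψC t

theorem tendstoUniformly_convolution {ι : Type*} {l : Filter ι} {F : ℝ → X →L[ℂ] X}
    {S : ι → ℝ → X →L[ℂ] X} (hF : Integrable F volume) (hS : ∀ i, Integrable (S i) volume)
    (hFS : Tendsto (fun i => ∫ s, ‖F s - S i s‖) l (𝓝 0))
    (hψ : AEStronglyMeasurable ψ volume) (hψC : ∀ x, ‖ψ x‖ ≤ C) :
    TendstoUniformly (fun i => S i ⋆[.id ℂ _] ψ) (F ⋆[.id ℂ _] ψ) l := by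
  rw [Metric.tendstoUniformly_iff]
  intro ε hε
  have hFSC := hFS.mul_const C
  rw [zero_mul] at hFSC
  filter_upwards [hFSC.eventually (gt_mem_nhds hε)] with i hi t
  exact (dist_convolution_le hF (hS i) hψ hψC t).trans_lt hi

variable [CompleteSpace X]

theorem indicator_Ico_convolution {h : ℝ} (hh : 0 < h) (hψ : AEStronglyMeasurable ψ volume)
    (hψC : ∀ x, ‖ψ x‖ ≤ C) (a : ℝ) (B : X →L[ℂ] X) (t : ℝ) :
    ((Set.Ico a (a + h)).indicator (fun _ => B) ⋆[.id ℂ _] ψ) t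
      = h • B (mean h ψ (t - (a + h))) := by
  have hint : ∫ s in a..a + h, ψ (t - s) = h • mean h ψ (t - (a + h)) := by
    rw [intervalIntegral.integral_comp_sub_left, mean_eq_smul_integral, smul_smul,
      mul_one_div_cancel hh.ne', one_smul, sub_add, add_sub_cancel_right]
  calc ((Set.Ico a (a + h)).indicator (fun _ => B) ⋆[.id ℂ _] ψ) t
      = ∫ s in Set.Ico a (a + h), B (ψ (t - s)) := by
        rw [convolution_def, ← integral_indicator measurableSet_Ico]
        congr 1 with s
        by_cases hs : s ∈ Set.Ico a (a + h) <;> simp [hs]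
    _ = ∫ s in a..a + h, B (ψ (t - s)) := by
        rw [intervalIntegral.integral_of_le (by linarith), integral_Ico_eq_integral_Ioc]
    _ = h • B (mean h ψ (t - (a + h))) := by
        rw [B.intervalIntegral_comp_comm, hint, B.map_smul_of_tower]
        exact intervalIntegrable_of_norm_le
          (hψ.comp_quasiMeasurePreserving (quasiMeasurePreserving_sub_left volume t))
          (fun s => hψC _) _ _

theorem stepFun_convolution {δ : ℝ} (hδ : 0 < δ) (hψ : AEStronglyMeasurable ψ volume)
    (hψC : ∀ x, ‖ψ x‖ ≤ C) (n : ℕ) (B : ℤ → X →L[ℂ] X) :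
    stepFun δ n B ⋆[.id ℂ _] ψ
      = ∑ k ∈ Finset.Icc (-n : ℤ) n, δ • fun t => B k (mean δ ψ (-(k * δ + δ) + t)) := by
  rw [stepFun, finset_sum_convolution _ _ fun k _ =>
    convolutionExists_of_norm_le (integrable_indicator_Ico_const _ _ _) hψ hψC]
  refine Finset.sum_congr rfl fun k _ => ?_
  ext t
  rw [indicator_Ico_convolution hδ hψ hψC, sub_eq_neg_add]
  rfl

theorem convolution_mem_of_forall_mean_mem (W : Submodule ℂ (ℝ → X))
    (htrans : ∀ φ ∈ W, ∀ a : ℝ, (fun t => φ (a + t)) ∈ W)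
    (hop : ∀ B : X →L[ℂ] X, ∀ φ ∈ W, (fun t => B (φ t)) ∈ W)
    (hlim : ∀ (f : ℕ → ℝ → X) (g : ℝ → X), (∀ n, f n ∈ W) → TendstoUniformly f g atTop → g ∈ W)
    (hψ : AEStronglyMeasurable ψ volume) (hψC : ∀ x, ‖ψ x‖ ≤ C)
    (hmean : ∀ h, 0 < h → mean h ψ ∈ W) {F : ℝ → X →L[ℂ] X} (hF : Integrable F volume) :
    F ⋆[.id ℂ _] ψ ∈ W := by
  have hstep (δ : ℝ) (hδ : 0 < δ) (n : ℕ) (B : ℤ → X →L[ℂ] X) :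
      stepFun δ n B ⋆[.id ℂ _] ψ ∈ W := by
    rw [stepFun_convolution hδ hψ hψC]
    exact W.sum_mem fun k _ => W.smul_of_tower_mem δ (hop _ _ (htrans _ (hmean δ hδ) _))
  choose δ hδ n B hB using fun m : ℕ =>
    hF.exists_stepFun_integral_norm_sub_le (Nat.one_div_pos_of_nat (n := m))
  refine hlim _ _ (fun m => hstep _ (hδ m) (n m) (B m))
    (tendstoUniformly_convolution hF (fun m => integrable_stepFun _ _ _) ?_ hψ hψC)
  exact squeeze_zero (fun m => integral_nonneg fun _ => norm_nonneg _) hB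
    tendsto_one_div_add_atTop_nhds_zero_nat

end OperatorConvolution

section BoundedUniformlyContinuous

variable {X : Type*} [NormedAddCommGroup X] [NormedSpace ℂ X]

/-- The conclusion of the theorem says exactly that `F ⋆ φ` lies in this subspace. -/
def bucRestrictPreimage (J : Set ℝ) (V : Submodule ℂ (J → X)) : Submodule ℂ (ℝ → X) where
  carrier := {φ | (∃ C : ℝ, ∀ t, ‖φ t‖ ≤ C) ∧ UniformContinuous φ ∧ J.domRestrict φ ∈ V}
  zero_mem' := ⟨⟨0, by simp⟩, uniformContinuous_const, V.zero_mem⟩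
  add_mem' := by
    rintro φ ψ ⟨⟨C, hC⟩, hφ, hφV⟩ ⟨⟨D, hD⟩, hψ, hψV⟩
    exact ⟨⟨C + D, fun t => norm_add_le_of_le (hC t) (hD t)⟩, hφ.add hψ, V.add_mem hφV hψV⟩
  smul_mem' := by
    rintro c φ ⟨⟨C, hC⟩, hφ, hφV⟩
    refine ⟨⟨‖c‖ * C, fun t => ?_⟩, hφ.const_smul c, V.smul_mem c hφV⟩
    rw [Pi.smul_apply, norm_smul]
    exact mul_le_mul_of_nonneg_left (hC t) (norm_nonneg c)

variable {J : Set ℝ} {V : Submodule ℂ (J → X)}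

theorem add_left_mem_bucRestrictPreimage
    (htrans : ∀ φ : ℝ → X, (∃ C : ℝ, ∀ t, ‖φ t‖ ≤ C) → UniformContinuous φ →
      J.domRestrict φ ∈ V → ∀ a : ℝ, J.domRestrict (fun t => φ (a + t)) ∈ V)
    {φ : ℝ → X} (hφ : φ ∈ bucRestrictPreimage J V) (a : ℝ) :
    (fun t => φ (a + t)) ∈ bucRestrictPreimage J V :=
  let ⟨⟨C, hC⟩, huc, hV⟩ := hφ
  ⟨⟨C, fun _ => hC _⟩, huc.comp (uniformContinuous_const.add uniformContinuous_id),
    htrans φ ⟨C, hC⟩ huc hV a⟩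

theorem clm_comp_mem_bucRestrictPreimage
    (hop : ∀ (B : X →L[ℂ] X) (φ : ℝ → X), (∃ C : ℝ, ∀ t, ‖φ t‖ ≤ C) → UniformContinuous φ →
      J.domRestrict φ ∈ V → J.domRestrict (fun t => B (φ t)) ∈ V)
    (B : X →L[ℂ] X) {φ : ℝ → X} (hφ : φ ∈ bucRestrictPreimage J V) :
    (fun t => B (φ t)) ∈ bucRestrictPreimage J V :=
  let ⟨⟨C, hC⟩, huc, hV⟩ := hφ
  ⟨⟨‖B‖ * C, fun t => B.le_of_opNorm_le_of_le le_rfl (hC t)⟩, B.uniformContinuous.comp huc,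
    hop B φ ⟨C, hC⟩ huc hV⟩

theorem mem_bucRestrictPreimage_of_tendstoUniformly
    (hlim : ∀ (φn : ℕ → J → X) (ψ : J → X), (∀ n, φn n ∈ V) →
      (∀ n, (∃ C : ℝ, ∀ t, ‖φn n t‖ ≤ C) ∧ UniformContinuous (φn n)) →
      TendstoUniformly φn ψ atTop → ψ ∈ V)
    {f : ℕ → ℝ → X} {g : ℝ → X} (hf : ∀ n, f n ∈ bucRestrictPreimage J V)
    (hfg : TendstoUniformly f g atTop) : g ∈ bucRestrictPreimage J V := by
  refine ⟨exists_norm_le_of_tendstoUniformly (fun n => (hf n).1) hfg,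
    hfg.uniformContinuous (.of_forall fun n => (hf n).2.1),
    hlim _ _ (fun n => (hf n).2.2) (fun n => ⟨?_, (hf n).2.1.comp uniformContinuous_subtype_val⟩)
    (hfg.comp Subtype.val)⟩
  obtain ⟨C, hC⟩ := (hf n).1
  exact ⟨C, fun t => hC t⟩

end BoundedUniformlyContinuous

theorem stmt17_general {X : Type*} [NormedAddCommGroup X] [NormedSpace ℂ X] [CompleteSpace X]
    (J : Set ℝ)
    (𝓕 : Set (J → X))
    -- (6.2) `𝓕` is a linear subspace of the locally Bochner integrable functions `𝕁 → X`
    (h62zero : (0 : J → X) ∈ 𝓕)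
    (h62add : ∀ f ∈ 𝓕, ∀ g ∈ 𝓕, f + g ∈ 𝓕)
    (h62smul : ∀ f ∈ 𝓕, ∀ c : ℂ, c • f ∈ 𝓕)
    -- (6.3) uniform limits of bounded uniformly continuous members of `𝓕` lie in `𝓕`
    (h63 : ∀ (φn : ℕ → J → X) (ψ : J → X), (∀ n, φn n ∈ 𝓕) →
      (∀ n, (∃ C : ℝ, ∀ t : J, ‖φn n t‖ ≤ C) ∧ UniformContinuous (φn n)) →
      TendstoUniformly φn ψ atTop → ψ ∈ 𝓕)
    -- (6.4) BUC-invariance under translation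
    (h64 : ∀ φ : ℝ → X, (∃ C : ℝ, ∀ t : ℝ, ‖φ t‖ ≤ C) → UniformContinuous φ →
      J.restrict φ ∈ 𝓕 → ∀ a : ℝ, J.restrict (fun t : ℝ => φ (a + t)) ∈ 𝓕)
    -- (6.5) invariance under bounded operators
    (h65 : ∀ (B : X →L[ℂ] X) (φ : ℝ → X),
      (∃ C : ℝ, ∀ t : ℝ, ‖φ t‖ ≤ C) → UniformContinuous φ →
      J.restrict φ ∈ 𝓕 → J.restrict (fun t : ℝ => B (φ t)) ∈ 𝓕)
    (φ : ℝ → X) (hφ : MemLp φ ⊤ (volume : Measure ℝ))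
    (hMh : ∀ h : ℝ, 0 < h →
      J.restrict (fun t : ℝ => (1 / h) • ∫ s in (0 : ℝ)..h, φ (t + s)) ∈ 𝓕)
    (F : ℝ → X →L[ℂ] X) (hF : Integrable F (volume : Measure ℝ)) :
    (∃ C : ℝ, ∀ t : ℝ, ‖∫ s : ℝ, F s (φ (t - s))‖ ≤ C) ∧
    UniformContinuous (fun t : ℝ => ∫ s : ℝ, F s (φ (t - s))) ∧
    J.restrict (fun t : ℝ => ∫ s : ℝ, F s (φ (t - s))) ∈ 𝓕 := by
  obtain ⟨ψ, C, hψ, hψC, hφψ⟩ := hφ.exists_stronglyMeasurable_bounded_ae_eq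
  let V : Submodule ℂ (J → X) :=
    { carrier := 𝓕
      add_mem' := fun hf hg => h62add _ hf _ hg
      zero_mem' := h62zero
      smul_mem' := fun c f hf => h62smul f hf c }
  have hmean (h : ℝ) (hh : 0 < h) : mean h ψ ∈ bucRestrictPreimage J V := by
    refine ⟨⟨C, norm_mean_le hψC hh⟩,
      (lipschitzWith_mean hψ.aestronglyMeasurable hψC hh).uniformContinuous, ?_⟩
    rw [← mean_congr_ae hφψ]
    exact hMh h hh
  have hconv := convolution_mem_of_forall_mean_mem (bucRestrictPreimage J V)
    (fun _ => add_left_mem_bucRestrictPreimage h64) (clm_comp_mem_bucRestrictPreimage h65)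
    (fun _ _ => mem_bucRestrictPreimage_of_tendstoUniformly h63) hψ.aestronglyMeasurable hψC
    hmean hF
  rwa [← convolution_congr _ (.refl _ F) hφψ] at hconv

/-- **Lemma 6.1.** Let `𝕁 ∈ {ℝ, [0,∞)}` and let `𝓕` be a class
of functions `𝕁 → X` satisfying (6.2)–(6.5).  If `φ ∈ L^∞(ℝ, X)` with
`(M_h φ)|𝕁 ∈ 𝓕` for all `h > 0` and `F ∈ L¹(ℝ, L(X))`, then `F*φ` is bounded
and uniformly continuous on `ℝ` and `(F*φ)|𝕁 ∈ 𝓕`. -/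
theorem stmt17 {X : Type*} [NormedAddCommGroup X] [NormedSpace ℂ X] [CompleteSpace X]
    (J : Set ℝ) (hJ : J = Set.univ ∨ J = Set.Ici 0)
    (𝓕 : Set (J → X))
    -- (6.2) `𝓕` is a linear subspace of the locally Bochner integrable functions `𝕁 → X`
    (h62zero : (0 : J → X) ∈ 𝓕)
    (h62add : ∀ f ∈ 𝓕, ∀ g ∈ 𝓕, f + g ∈ 𝓕)
    (h62smul : ∀ f ∈ 𝓕, ∀ c : ℂ, c • f ∈ 𝓕)
    (h62loc : ∀ f ∈ 𝓕, ∀ K : Set ℝ, IsCompact K → K ⊆ J →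
      IntegrableOn (Function.extend (Subtype.val : J → ℝ) f (fun _ => 0)) K
        (volume : Measure ℝ))
    -- (6.3) uniform limits of bounded uniformly continuous members of `𝓕` lie in `𝓕`
    (h63 : ∀ (φn : ℕ → J → X) (ψ : J → X), (∀ n, φn n ∈ 𝓕) →
      (∀ n, (∃ C : ℝ, ∀ t : J, ‖φn n t‖ ≤ C) ∧ UniformContinuous (φn n)) →
      TendstoUniformly φn ψ atTop → ψ ∈ 𝓕)
    -- (6.4) BUC-invariance under translation
    (h64 : ∀ φ : ℝ → X, (∃ C : ℝ, ∀ t : ℝ, ‖φ t‖ ≤ C) → UniformContinuous φ →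
      J.restrict φ ∈ 𝓕 → ∀ a : ℝ, J.restrict (fun t : ℝ => φ (a + t)) ∈ 𝓕)
    -- (6.5) invariance under bounded operators
    (h65 : ∀ (B : X →L[ℂ] X) (φ : ℝ → X),
      (∃ C : ℝ, ∀ t : ℝ, ‖φ t‖ ≤ C) → UniformContinuous φ →
      J.restrict φ ∈ 𝓕 → J.restrict (fun t : ℝ => B (φ t)) ∈ 𝓕)
    (φ : ℝ → X) (hφ : MemLp φ ⊤ (volume : Measure ℝ))
    (hMh : ∀ h : ℝ, 0 < h →
      J.restrict (fun t : ℝ => (1 / h) • ∫ s in (0 : ℝ)..h, φ (t + s)) ∈ 𝓕)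
    (F : ℝ → X →L[ℂ] X) (hF : Integrable F (volume : Measure ℝ)) :
    (∃ C : ℝ, ∀ t : ℝ, ‖∫ s : ℝ, F s (φ (t - s))‖ ≤ C) ∧
    UniformContinuous (fun t : ℝ => ∫ s : ℝ, F s (φ (t - s))) ∧
    J.restrict (fun t : ℝ => ∫ s : ℝ, F s (φ (t - s))) ∈ 𝓕 :=
  stmt17_general J 𝓕 h62zero h62add h62smul h63 h64 h65 φ hφ hMh F hF
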